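/- Let r > 0, a ∈ ℝ, A(t,s) = e^{2s+2t} + (a−r)²e^{2s} + e^{2t} + (a+r)², and φ(t,s) = arcosh(A/(4re^{s+t})). If r > |a| and (t₀, s₀) are defined by e^{2t₀} = r² − a² and e^{2s₀} = (r+a)/(r−a), then the zero set of ∂²φ/∂s∂t (wherever A² > 16r²e^{2s+2t}) is exactly {(t,s) : t = t₀ or s = s₀}. -/

import Mathlib

/-- Inverse hyperbolic cosine: `arcosh x = log (x + √(x² − 1))`. -/
noncomputable def arcosh (x : ℝ) : ℝ := Real.log (x + Real.sqrt (x ^ 2 - 1))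

/-- `A(t,s) = e^{2s+2t} + (a−r)²e^{2s} + e^{2t} + (a+r)²`. -/
noncomputable def Afun (r a t s : ℝ) : ℝ :=
  Real.exp (2 * s + 2 * t) + (a - r) ^ 2 * Real.exp (2 * s) + Real.exp (2 * t) + (a + r) ^ 2

/-- Hyperbolic distance between `(0,eᵗ)` and the point at arclength parameter `s` on the
half-circle geodesic of center `(a,0)` and radius `r`. -/
noncomputable def phiCirc (r a t s : ℝ) : ℝ :=
  arcosh (Afun r a t s / (4 * r * Real.exp (s + t)))

/-!
Differentiating `arcosh` gives `∂φ/∂t = C/√B` with `B = A² − 16r²e^{2s+2t}` and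
`C = ∂A/∂t − A`. Differentiating once more in `s`, the numerator `2 (∂C/∂s) B − C (∂B/∂s)`
factors as `32 r e^{2s+2t} (a + r + (a − r)e^{2s}) (a² − r² + e^{2t})`, and the last two
factors vanish exactly at `s = s₀` and at `t = t₀` respectively.
-/

open Real hiding arcosh
open Topology

theorem HasDerivAt.div_sqrt {f g : ℝ → ℝ} {f' g' x : ℝ} (hf : HasDerivAt f f' x)
    (hg : HasDerivAt g g' x) (hgx : 0 < g x) :
    HasDerivAt (fun y => f y / √(g y)) ((2 * f' * g x - f x * g') / (2 * g x * √(g x))) x := by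
  have hsqrt : 0 < √(g x) := sqrt_pos.mpr hgx
  refine (hf.div (hg.sqrt hgx.ne') hsqrt.ne').congr_deriv ?_
  field_simp
  rw [sq_sqrt hgx.le]
  ring

lemma hasDerivAt_two_mul_add (c x : ℝ) : HasDerivAt (fun y => 2 * y + c) 2 x := by
  simpa using ((hasDerivAt_id x).const_mul 2).add_const c

lemma hasDerivAt_add_two_mul (c x : ℝ) : HasDerivAt (fun y => c + 2 * y) 2 x := by
  simpa using ((hasDerivAt_id x).const_mul 2).const_add c

lemma hasDerivAt_two_mul (x : ℝ) : HasDerivAt (fun y => 2 * y) 2 x := by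
  simpa using (hasDerivAt_id x).const_mul 2

lemma exp_two_mul_eq_sq (x : ℝ) : exp (2 * x) = exp x ^ 2 := by
  rw [two_mul, exp_add, sq]

noncomputable def Bfun (r a t s : ℝ) : ℝ :=
  Afun r a t s ^ 2 - 16 * r ^ 2 * exp (2 * s + 2 * t)

noncomputable def Cfun (r a t s : ℝ) : ℝ :=
  exp (2 * s + 2 * t) - (a - r) ^ 2 * exp (2 * s) + exp (2 * t) - (a + r) ^ 2

section

variable {r : ℝ} (a t s : ℝ)

lemma hasDerivAt_Afun_div_t (hr : 0 < r) :
    HasDerivAt (fun t' => Afun r a t' s / (4 * r * exp (s + t')))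
      (Cfun r a t s / (4 * r * exp (s + t))) t := by
  have hA : HasDerivAt (fun t' => Afun r a t' s) (exp (2 * s + 2 * t) * 2 + exp (2 * t) * 2) t :=
    ((((hasDerivAt_add_two_mul (2 * s) t).exp).add_const _).add
      (hasDerivAt_two_mul t).exp).add_const _
  have hd : HasDerivAt (fun t' => 4 * r * exp (s + t')) (4 * r * exp (s + t)) t := by
    simpa using (((hasDerivAt_id t).const_add s).exp).const_mul (4 * r)
  refine (hA.div hd (by positivity)).congr_deriv ?_
  simp only [Afun, Cfun, exp_add, exp_two_mul_eq_sq]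
  field_simp
  ring

lemma Afun_div_sq_sub_one (hr : 0 < r) :
    (Afun r a t s / (4 * r * exp (s + t))) ^ 2 - 1 = Bfun r a t s / (4 * r * exp (s + t)) ^ 2 := by
  simp only [Bfun, exp_add, exp_two_mul_eq_sq]
  field_simp
  ring

lemma hasDerivAt_phiCirc_t (hr : 0 < r) (hB : 0 < Bfun r a t s) :
    HasDerivAt (fun t' => phiCirc r a t' s) (Cfun r a t s / √(Bfun r a t s)) t := by
  have hd : 0 < 4 * r * exp (s + t) := by positivity
  have hu : 1 < Afun r a t s / (4 * r * exp (s + t)) := by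
    have hsq : 0 < (Afun r a t s / (4 * r * exp (s + t))) ^ 2 - 1 := by
      rw [Afun_div_sq_sub_one a t s hr]; positivity
    have hA : 0 < Afun r a t s := by unfold Afun; positivity
    nlinarith [div_pos hA hd]
  -- `arcosh` is definitionally `Real.arcosh`
  refine ((Real.hasDerivAt_arcosh hu).comp t (hasDerivAt_Afun_div_t a t s hr)).congr_deriv ?_
  rw [Afun_div_sq_sub_one a t s hr, sqrt_div' _ (sq_nonneg _), sqrt_sq hd.le]
  field_simp

lemma hasDerivAt_Cfun_s :
    HasDerivAt (fun s' => Cfun r a t s')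
      (2 * exp (2 * s + 2 * t) - 2 * (a - r) ^ 2 * exp (2 * s)) s := by
  refine ((((hasDerivAt_two_mul_add (2 * t) s).exp).sub
    ((hasDerivAt_two_mul s).exp.const_mul _)).add_const _ |>.sub_const _).congr_deriv ?_
  ring

lemma hasDerivAt_Afun_s :
    HasDerivAt (fun s' => Afun r a t s')
      (2 * exp (2 * s + 2 * t) + 2 * (a - r) ^ 2 * exp (2 * s)) s := by
  refine ((((hasDerivAt_two_mul_add (2 * t) s).exp).add
    ((hasDerivAt_two_mul s).exp.const_mul _)).add_const _ |>.add_const _).congr_deriv ?_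
  ring

lemma hasDerivAt_Bfun_s :
    HasDerivAt (fun s' => Bfun r a t s')
      (2 * Afun r a t s * (2 * exp (2 * s + 2 * t) + 2 * (a - r) ^ 2 * exp (2 * s))
        - 32 * r ^ 2 * exp (2 * s + 2 * t)) s := by
  refine (((hasDerivAt_Afun_s a t s).pow 2).sub
    ((hasDerivAt_two_mul_add (2 * t) s).exp.const_mul _)).congr_deriv ?_
  ring

lemma deriv_deriv_phiCirc (hr : 0 < r) (hB : 0 < Bfun r a t s) :
    deriv (fun s' => deriv (fun t' => phiCirc r a t' s') t) s =
      16 * r * exp (2 * s + 2 * t) * (a + r + (a - r) * exp (2 * s)) * (a ^ 2 - r ^ 2 + exp (2 * t))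
        / (Bfun r a t s * √(Bfun r a t s)) := by
  have hcont : Continuous fun s' => Bfun r a t s' := by unfold Bfun Afun; fun_prop
  have hnear : ∀ᶠ s' in 𝓝 s, 0 < Bfun r a t s' :=
    continuousAt_const.eventually_lt hcont.continuousAt hB
  have hinner : (fun s' => deriv (fun t' => phiCirc r a t' s') t) =ᶠ[𝓝 s]
      fun s' => Cfun r a t s' / √(Bfun r a t s') :=
    hnear.mono fun s' h => (hasDerivAt_phiCirc_t a t s' hr h).deriv
  rw [hinner.deriv_eq, ((hasDerivAt_Cfun_s a t s).div_sqrt (hasDerivAt_Bfun_s a t s) hB).deriv]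
  have hsqrt : 0 < √(Bfun r a t s) := sqrt_pos.mpr hB
  rw [div_eq_div_iff (by positivity) (by positivity)]
  simp only [Bfun, Afun, Cfun, exp_add]
  ring

end

theorem stmt4 (r a t₀ s₀ : ℝ) (hr : 0 < r) (hra : |a| < r)
    (ht₀ : Real.exp (2 * t₀) = r ^ 2 - a ^ 2)
    (hs₀ : Real.exp (2 * s₀) = (r + a) / (r - a)) :
    ∀ t s : ℝ, 16 * r ^ 2 * Real.exp (2 * s + 2 * t) < Afun r a t s ^ 2 →
      (deriv (fun s' => deriv (fun t' => phiCirc r a t' s') t) s = 0 ↔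
        t = t₀ ∨ s = s₀) := by
  intro t s hA
  have hB : 0 < Bfun r a t s := sub_pos.mpr hA
  have hra_sub : r - a ≠ 0 := by linarith [le_abs_self a]
  have ht : a ^ 2 - r ^ 2 + exp (2 * t) = 0 ↔ t = t₀ := by
    rw [← (by simp : exp (2 * t) = exp (2 * t₀) ↔ t = t₀), ht₀]
    constructor <;> intro h <;> linear_combination h
  have hs : a + r + (a - r) * exp (2 * s) = 0 ↔ s = s₀ := by
    rw [← (by simp : exp (2 * s) = exp (2 * s₀) ↔ s = s₀), hs₀, eq_div_iff hra_sub]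
    constructor <;> intro h <;> linear_combination -h
  have hden : Bfun r a t s * √(Bfun r a t s) ≠ 0 := by positivity
  simp only [deriv_deriv_phiCirc a t s hr hB, div_eq_zero_iff, hden, or_false, mul_eq_zero,
    hr.ne', exp_ne_zero, OfNat.ofNat_ne_zero, false_or]
  rw [ht, hs, or_comm]
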